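/- Let X and Y be disjoint finite sets, let F be a pure angularly X-decorated rooted forest and G a pure angularly Y-decorated rooted forest. Then F ⋄ G is a k-linear combination of pure angularly (X ⊔ Y)-decorated rooted forests, i.e., F ⋄ G ∈ ADF[X ⊔ Y]. -/

import Mathlib

/-!
Preamble: angularly decorated planar rooted trees and forests, the species `ADF` of
pure angularly decorated forests, the product `⋄`, the grafting operator `B⁺`,
and the augmentation `ε`, following Foissy–Guo–Peng–Xie–Zhang,
"Species of Rota-Baxter algebras by rooted trees, twisted bialgebras and Fock functors".
-/

attribute [local instance 10] Classical.propDecidable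

-- Angularly decorated planar rooted trees (`ATree`) and forests (`AForest`) with
-- angles decorated by elements of `E`.
mutual
  inductive ATree (E : Type) : Type where
    | leaf : ATree E
    | graft : AForest E → ATree E
  inductive AForest (E : Type) : Type where
    | single : ATree E → AForest E
    | cons : ATree E → E → AForest E → AForest E
end

mutual
  /-- The depth of an angularly decorated tree. -/
  def ATree.depth {E : Type} : ATree E → ℕ
    | .leaf => 0
    | .graft F => AForest.depth F + 1
  /-- The depth of an angularly decorated forest. -/
  def AForest.depth {E : Type} : AForest E → ℕ
    | .single T => ATree.depth T
    | .cons T _ G => max (ATree.depth T) (AForest.depth G)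
end

mutual
  /-- The list of angle decorations of a tree, from left to right. -/
  def ATree.decs {E : Type} : ATree E → List E
    | .leaf => []
    | .graft F => AForest.decs F
  /-- The list of angle decorations of a forest, from left to right. -/
  def AForest.decs {E : Type} : AForest E → List E
    | .single T => ATree.decs T
    | .cons T x G => ATree.decs T ++ x :: AForest.decs G
end

mutual
  /-- Relabelling the angle decorations of a tree along a map. -/
  def ATree.relabel {E E' : Type} (f : E → E') : ATree E → ATree E'
    | .leaf => .leaf
    | .graft F => .graft (AForest.relabel f F)
  /-- Relabelling the angle decorations of a forest along a map. -/
  def AForest.relabel {E E' : Type} (f : E → E') : AForest E → AForest E'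
    | .single T => .single (ATree.relabel f T)
    | .cons T x G => .cons (ATree.relabel f T) (f x) (AForest.relabel f G)
end

/-- The single-vertex tree `•`, as a forest. -/
def bulletF (E : Type) : AForest E := .single .leaf

/-- The product `⋄` of angularly decorated forests, with values in linear combinations
of angularly decorated forests.  It is defined by induction on the sum of depths:
`• ⋄ F' = F'`, `F ⋄ • = F`,
`(T x G) ⋄ F' = T x (G ⋄ F')`,
and for trees `B⁺(F) ⋄ B⁺(F') = B⁺(B⁺(F) ⋄ F') + B⁺(F ⋄ B⁺(F')) + λ B⁺(F ⋄ F')`,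
placed back into the surrounding forest. -/
noncomputable def forestMul {k : Type} [Field k] {E : Type} (lam : k) :
    AForest E → AForest E → (AForest E →₀ k)
  | .single .leaf, F' => Finsupp.single F' 1
  | F, .single .leaf => Finsupp.single F 1
  | .cons T x G, F' =>
      Finsupp.mapDomain (fun H => AForest.cons T x H) (forestMul lam G F')
  | .single (.graft F), .cons .leaf y G' =>
      Finsupp.single (AForest.cons (ATree.graft F) y G') 1
  | .single (.graft F), .cons (.graft F') y G' =>
      Finsupp.mapDomain (fun S => AForest.cons S y G')
        (Finsupp.mapDomain ATree.graft
          (forestMul lam (AForest.single (ATree.graft F)) F' +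
           forestMul lam F (AForest.single (ATree.graft F')) +
           lam • forestMul lam F F'))
  | .single (.graft F), .single (.graft F') =>
      Finsupp.mapDomain AForest.single
        (Finsupp.mapDomain ATree.graft
          (forestMul lam (AForest.single (ATree.graft F)) F' +
           forestMul lam F (AForest.single (ATree.graft F')) +
           lam • forestMul lam F F'))
termination_by F F' => (AForest.depth F + AForest.depth F', sizeOf F + sizeOf F')
decreasing_by
  all_goals
    simp only [AForest.depth, ATree.depth, AForest.cons.sizeOf_spec, AForest.single.sizeOf_spec,
      ATree.graft.sizeOf_spec, ATree.leaf.sizeOf_spec]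
    rw [Prod.lex_def]
    omega

/-- A forest over the decoration set `X` is pure if each element of `X` decorates
exactly one of its angles. -/
def IsPure {E : Type} (F : AForest E) : Prop :=
  F.decs.Nodup ∧ ∀ x : E, x ∈ F.decs

/-- Pure angularly `X`-decorated rooted forests. -/
def PureForest (E : Type) : Type := {F : AForest E // IsPure F}

/-- The vector space spanned by all angularly `E`-decorated forests. -/
abbrev RawADF (k : Type) [Field k] (E : Type) : Type := AForest E →₀ k

/-- `ADF[X]`: the vector space with basis the pure angularly `X`-decorated forests. -/
abbrev ADF (k : Type) [Field k] (E : Type) : Type := PureForest E →₀ k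

variable (k : Type) [Field k]

/-- The projection from the span of all forests onto `ADF[X]` (discarding non-pure forests). -/
noncomputable def toPureL (E : Type) : RawADF k E →ₗ[k] ADF k E where
  toFun f := Finsupp.subtypeDomain IsPure f
  map_add' _ _ := Finsupp.subtypeDomain_add
  map_smul' _ _ := Finsupp.ext fun _ => rfl

/-- The inclusion of `ADF[X]` into the span of all forests. -/
noncomputable def rawOfL (E : Type) : ADF k E →ₗ[k] RawADF k E :=
  Finsupp.lmapDomain k k Subtype.val

/-- Relabelling decorations, on linear combinations of forests. -/
noncomputable def rawRelabelL {E E' : Type} (f : E → E') : RawADF k E →ₗ[k] RawADF k E' :=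
  Finsupp.lmapDomain k k (AForest.relabel f)

/-- The grafting operator `B⁺` on linear combinations of forests. -/
noncomputable def rawGraftL (E : Type) : RawADF k E →ₗ[k] RawADF k E :=
  Finsupp.lmapDomain k k (fun F => AForest.single (ATree.graft F))

/-- The Rota-Baxter operator `R_X = B⁺` on `ADF[X]`. -/
noncomputable def RadfL (E : Type) : ADF k E →ₗ[k] ADF k E :=
  (toPureL k E).comp ((rawGraftL k E).comp (rawOfL k E))

/-- `ADF[σ]`: the action of a bijection `σ : X ≃ Y` on `ADF[X]`. -/
noncomputable def ADFmapL {E E' : Type} (σ : E ≃ E') : ADF k E →ₗ[k] ADF k E' :=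
  (toPureL k E').comp ((rawRelabelL k σ).comp (rawOfL k E))

/-- The augmentation `ε_X : ADF[X] → k`, the coefficient of the single-vertex tree `•`. -/
noncomputable def epsL (E : Type) : ADF k E →ₗ[k] k :=
  (Finsupp.lapply (bulletF E)).comp (rawOfL k E)

/-- The bilinear extension of the product `⋄` to linear combinations of forests. -/
noncomputable def rawMulL {E : Type} (lam : k) : RawADF k E →ₗ[k] RawADF k E →ₗ[k] RawADF k E :=
  Finsupp.lsum k fun F =>
    LinearMap.toSpanSingleton k (RawADF k E →ₗ[k] RawADF k E)
      (Finsupp.lsum k fun G => LinearMap.toSpanSingleton k (RawADF k E) (forestMul lam F G))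

/-- `ADF[X] → ADF[X ⊔ Y]`-part of the product. -/
noncomputable def inclL (X Y : Type) : ADF k X →ₗ[k] RawADF k (X ⊕ Y) :=
  (rawRelabelL k Sum.inl).comp (rawOfL k X)

/-- `ADF[Y] → ADF[X ⊔ Y]`-part of the product. -/
noncomputable def inclR (X Y : Type) : ADF k Y →ₗ[k] RawADF k (X ⊕ Y) :=
  (rawRelabelL k Sum.inr).comp (rawOfL k Y)

/-- The multiplication `m_{X,Y} : ADF[X] ⊗ ADF[Y] → ADF[X ⊔ Y]`, `F ⊗ G ↦ F ⋄ G`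
(as a bilinear map). -/
noncomputable def mulADF (lam : k) (X Y : Type) :
    ADF k X →ₗ[k] ADF k Y →ₗ[k] ADF k (X ⊕ Y) :=
  ((((rawMulL k lam).comp (inclL k X Y)).compl₂ (inclR k X Y)).compr₂ (toPureL k (X ⊕ Y)))

theorem isPure_bulletF (E : Type) [IsEmpty E] : IsPure (bulletF E) :=
  ⟨by simp [bulletF, AForest.decs, ATree.decs], fun x => (IsEmpty.false x).elim⟩

/-- The unit `•` of `ADF`, an element of `ADF[∅]`. -/
noncomputable def bulletADF (E : Type) [IsEmpty E] : ADF k E :=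
  Finsupp.single ⟨bulletF E, isPure_bulletF E⟩ 1

/-- The two-leaf forest `• x •` whose unique angle is decorated by
the unique element `x` of a singleton set `X`. -/
def genF (E : Type) [Unique E] : AForest E :=
  .cons .leaf default (.single .leaf)

theorem isPure_genF (E : Type) [Unique E] : IsPure (genF E) := by
  constructor
  · simp [genF, AForest.decs, ATree.decs]
  · intro x
    simp [genF, AForest.decs, ATree.decs, Unique.eq_default x]

/-- The generator `• x •` of `ADF[{x}]`. -/
noncomputable def genADF (E : Type) [Unique E] : ADF k E :=
  Finsupp.single ⟨genF E, isPure_genF E⟩ 1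

/-- The map `k → ADF[X]`, `c ↦ c • bullet` if `X` is empty, and `0` otherwise. -/
noncomputable def etaADF (E : Type) : k →ₗ[k] ADF k E :=
  dite (IsEmpty E)
    (fun h => LinearMap.toSpanSingleton k (ADF k E) (@bulletADF k _ E h))
    (fun _ => 0)

/-!
The product `⋄` only regrafts the trees of its two factors: no rule creates, deletes or
permutes an angle, so every forest occurring in `F ⋄ G` carries the decorations of `F` followed
by those of `G`. After relabelling into `X ⊕ Y` these two lists are disjoint, so each element of
`X ⊕ Y` decorates exactly one angle.
-/

mutual
  theorem ATree.decs_relabel {E E' : Type} (f : E → E') (T : ATree E) :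
      (ATree.relabel f T).decs = T.decs.map f := by
    cases T with
    | leaf => rfl
    | graft F => simpa [ATree.relabel, ATree.decs] using AForest.decs_relabel f F
  theorem AForest.decs_relabel {E E' : Type} (f : E → E') (F : AForest E) :
      (AForest.relabel f F).decs = F.decs.map f := by
    cases F with
    | single T => simpa [AForest.relabel, AForest.decs] using ATree.decs_relabel f T
    | cons T x G =>
        simp [AForest.relabel, AForest.decs, ATree.decs_relabel f T, AForest.decs_relabel f G]
end

theorem IsPure.of_decs_eq_map_inl_append_map_inr {X Y : Type} {F : AForest X} {G : AForest Y}
    {H : AForest (X ⊕ Y)} (hF : IsPure F) (hG : IsPure G)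
    (hH : H.decs = F.decs.map Sum.inl ++ G.decs.map Sum.inr) : IsPure H := by
  rw [IsPure, hH]
  constructor
  · refine (hF.1.map Sum.inl_injective).append (hG.1.map Sum.inr_injective) ?_
    intro _ hx hy
    obtain ⟨x, -, rfl⟩ := List.mem_map.1 hx
    obtain ⟨y, -, h⟩ := List.mem_map.1 hy
    exact Sum.inr_ne_inl h
  · rintro (x | y)
    · exact List.mem_append_left _ (List.mem_map_of_mem (hF.2 x))
    · exact List.mem_append_right _ (List.mem_map_of_mem (hG.2 y))

theorem Finsupp.mapDomain_mem_supported {α β M R : Type*} [Semiring R] [AddCommMonoid M]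
    [Module R M] {f : α → β} {s : Set α} {t : Set β} (hf : Set.MapsTo f s t) {l : α →₀ M}
    (hl : l ∈ Finsupp.supported M R s) : Finsupp.mapDomain f l ∈ Finsupp.supported M R t :=
  Finsupp.supported_comap_lmapDomain M R f t (Finsupp.supported_mono hf hl)

section forestMul

variable {k : Type} [Field k] {E : Type} (lam : k)

theorem forestMul_graft_mem_supported_decs {F F' : AForest E}
    (h₁ : forestMul lam (.single (.graft F)) F' ∈
      Finsupp.supported k k {H | H.decs = (AForest.single (.graft F)).decs ++ F'.decs})
    (h₂ : forestMul lam F (.single (.graft F')) ∈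
      Finsupp.supported k k {H | H.decs = F.decs ++ (AForest.single (.graft F')).decs})
    (h₃ : forestMul lam F F' ∈ Finsupp.supported k k {H | H.decs = F.decs ++ F'.decs}) :
    Finsupp.mapDomain ATree.graft
        (forestMul lam (.single (.graft F)) F' + forestMul lam F (.single (.graft F')) +
          lam • forestMul lam F F') ∈
      Finsupp.supported k k {T | T.decs = F.decs ++ F'.decs} := by
  simp only [AForest.decs, ATree.decs] at h₁ h₂
  exact Finsupp.mapDomain_mem_supported (f := ATree.graft) (fun _ h => h)
    (add_mem (add_mem h₁ h₂) (Submodule.smul_mem _ _ h₃))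

theorem forestMul_mem_supported_decs (F G : AForest E) :
    forestMul lam F G ∈ Finsupp.supported k k {H | H.decs = F.decs ++ G.decs} := by
  induction F, G using forestMul.induct with
  | case1 G =>
    rw [forestMul.eq_1]
    exact Finsupp.single_mem_supported k _ (by simp [AForest.decs, ATree.decs])
  | case2 F h =>
    rw [forestMul.eq_2 lam F h]
    exact Finsupp.single_mem_supported k _ (by simp [AForest.decs, ATree.decs])
  | case3 T x F G h ih =>
    rw [forestMul.eq_3 lam G T x F h]
    refine Finsupp.mapDomain_mem_supported (fun H hH => ?_) ih
    simp_all [AForest.decs]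
  | case4 F y G =>
    rw [forestMul.eq_4]
    exact Finsupp.single_mem_supported k _ (by simp [AForest.decs, ATree.decs])
  | case5 F F' y G ih₁ ih₂ ih₃ =>
    rw [forestMul.eq_5]
    refine Finsupp.mapDomain_mem_supported (fun T hT => ?_)
      (forestMul_graft_mem_supported_decs lam ih₁ ih₂ ih₃)
    simp_all [AForest.decs, ATree.decs]
  | case6 F F' ih₁ ih₂ ih₃ =>
    rw [forestMul.eq_6]
    refine Finsupp.mapDomain_mem_supported (fun T hT => ?_)
      (forestMul_graft_mem_supported_decs lam ih₁ ih₂ ih₃)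
    simp_all [AForest.decs, ATree.decs]

end forestMul

/-- For disjoint finite sets `X`, `Y`, a pure angularly `X`-decorated forest `F`
and a pure angularly `Y`-decorated forest `G`, the product `F ⋄ G` is a `k`-linear combination
of pure angularly `(X ⊔ Y)`-decorated forests, i.e. `F ⋄ G ∈ ADF[X ⊔ Y]`. -/
theorem pure_mul_pure (lam : k) (X Y : Type) [Fintype X] [Fintype Y]
    (F : AForest X) (hF : IsPure F) (G : AForest Y) (hG : IsPure G) :
    ∀ H ∈ (forestMul (k := k) lam (AForest.relabel Sum.inl F) (AForest.relabel Sum.inr G)).support,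
      IsPure H := by
  intro H hH
  have hdecs := (Finsupp.mem_supported k _).1 (forestMul_mem_supported_decs lam _ _) hH
  rw [Set.mem_ofPred_eq, AForest.decs_relabel, AForest.decs_relabel] at hdecs
  exact hF.of_decs_eq_map_inl_append_map_inr hG hdecs
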